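/- The monomials x(τ_i), 1 ≤ i ≤ m, span R as a left S-module: every element of R is a left S-linear combination of x(τ_1), …, x(τ_m). -/

import Mathlib

open scoped Classical

noncomputable section

namespace SU

/-- The closed real cone spanned by the vectors `v j`, `j ∈ F`. -/
def realCone {n d : ℕ} (v : Fin d → Fin n → ℤ) (F : Finset (Fin d)) : Set (Fin n → ℝ) :=
  {x | ∃ c : Fin d → ℝ, (∀ j, 0 ≤ c j) ∧ (∀ j, j ∉ F → c j = 0) ∧
    x = ∑ j, c j • fun i => (v j i : ℝ)}

/-- A complete nonsingular fan in `N = ℤ^n`, recorded combinatorially.  Since the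
cones of a nonsingular fan are simplicial, every cone is determined by the set of
its edges; `isCone F` says that the primitive vectors `v j`, `j ∈ F`, span a cone
of the fan `Δ`.  Faces correspond to subsets, and the dimension of a cone is the
cardinality of its edge set. -/
structure Fan (n d : ℕ) where
  /-- the primitive generators of the `d` edges (1-dimensional cones) of the fan -/
  v : Fin d → Fin n → ℤ
  v_inj : Function.Injective v
  /-- `isCone F` : the `v j`, `j ∈ F`, span a cone of the fan -/
  isCone : Finset (Fin d) → Prop
  isCone_empty : isCone ∅
  isCone_singleton : ∀ j, isCone {j}
  /-- the fan is closed under taking faces -/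
  isCone_mono : ∀ {F G}, isCone F → G ⊆ F → isCone G
  /-- any two cones meet along a common face -/
  isCone_inter : ∀ {F G}, isCone F → isCone G → isCone (F ∩ G)
  realCone_inter : ∀ {F G}, isCone F → isCone G →
    realCone v F ∩ realCone v G = realCone v (F ∩ G)
  /-- the fan is complete : the union of its cones is all of `N ⊗ ℝ` -/
  complete : ∀ x : Fin n → ℝ, ∃ F, isCone F ∧ x ∈ realCone v F
  /-- nonsingularity : the generators of each cone form part of a `ℤ`-basis of `N` -/
  unimodular : ∀ {F}, isCone F → ∃ (b : Module.Basis (Fin n) ℤ (Fin n → ℤ))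
    (ι : Fin d → Fin n), Set.InjOn ι ↑F ∧ ∀ j ∈ F, b (ι j) = v j

/-- An enumeration `σ 0, …, σ (m-1)` of the `n`-dimensional cones of the fan. -/
structure MaxOrder {n d : ℕ} (Δ : Fan n d) (m : ℕ) where
  σ : Fin m → Finset (Fin d)
  isCone_σ : ∀ i, Δ.isCone (σ i)
  card_σ : ∀ i, (σ i).card = n
  σ_inj : Function.Injective σ
  σ_surj : ∀ F, Δ.isCone F → F.card = n → ∃ i, σ i = F

/-- `τ i` : the intersection of `σ i` with those cones `σ k`, `k > i`, with
`dim (σ i ∩ σ k) = n - 1`. -/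
def MaxOrder.tau {n d m : ℕ} {Δ : Fan n d} (o : MaxOrder Δ m) (i : Fin m) :
    Finset (Fin d) :=
  (o.σ i).filter fun j => ∀ k, i < k → ((o.σ i) ∩ (o.σ k)).card = n - 1 → j ∈ o.σ k

/-- Property (*) : `τ i` a face of `σ j` implies `i ≤ j`. -/
def MaxOrder.Star {n d m : ℕ} {Δ : Fan n d} (o : MaxOrder Δ m) : Prop :=
  ∀ i j, o.tau i ⊆ o.σ j → i ≤ j

/-- the set `{1, …, n} ⊆ {1, …, d}` of the first `n` edges -/
def firstn {n d : ℕ} (hnd : n ≤ d) : Finset (Fin d) :=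
  Finset.univ.map ⟨Fin.castLE hnd, Fin.castLE_injective hnd⟩

variable {n d : ℕ} (S : Type*) [Ring S]

/-- The polynomial algebra over a (possibly noncommutative) ring `S` in `d`
central, pairwise commuting, variables. -/
abbrev Poly (S : Type*) [Ring S] (d : ℕ) : Type _ := AddMonoidAlgebra S (Fin d →₀ ℕ)

/-- the variable `x j` -/
def X (j : Fin d) : Poly S d := AddMonoidAlgebra.single (Finsupp.single j 1) 1

/-- the scalar `s ∈ S` as a polynomial -/
def Cc (s : S) : Poly S d := AddMonoidAlgebra.single 0 s

/-- The square-free monomial `∏_{j ∈ F} x j`. -/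
def mon (F : Finset (Fin d)) : Poly S d :=
  AddMonoidAlgebra.single (∑ j ∈ F, Finsupp.single j 1) 1

lemma commute_X (j k : Fin d) : Commute (X S j) (X S k) := by
  show X S j * X S k = X S k * X S j
  simp only [X]
  rw [AddMonoidAlgebra.single_mul_single, AddMonoidAlgebra.single_mul_single, add_comm]

lemma commute_one_sub_X_pow (j k : Fin d) (a b : ℕ) :
    Commute ((1 - X S j) ^ a) ((1 - X S k) ^ b) :=
  ((Commute.one_left (1 - X S k)).sub_left
    ((Commute.one_right (X S j)).sub_right (commute_X S j k))).pow_pow a b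

/-- the relation (on the polynomial ring) identifying every member of `gens`
with `0`; the corresponding `RingQuot` is the quotient by the two-sided ideal
generated by `gens`. -/
def relOf (gens : Set (Poly S d)) : Poly S d → Poly S d → Prop :=
  fun p q => p ∈ gens ∧ q = 0

/-- type (i) generators : the monomials `x_{j₁} ⋯ x_{j_k}` (distinct indices)
such that `v_{j₁}, …, v_{j_k}` do not span a cone of `Δ`. -/
def gensCone (Δ : Fan n d) : Set (Poly S d) :=
  {p | ∃ F : Finset (Fin d), ¬ Δ.isCone F ∧ p = mon S F}

/-- type (ii) generators : the elements `y i = ∑_j ⟨u i, v j⟩ x j - r i`. -/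
def gensLin (Δ : Fan n d) (uu : Fin n → ((Fin n → ℤ) →ₗ[ℤ] ℤ)) (r : Fin n → S) :
    Set (Poly S d) :=
  {p | ∃ i : Fin n, p = (∑ j, (uu i (Δ.v j)) • X S j) - Cc S (r i)}

/-- the generators of the ideal `I_S` -/
def gensI (Δ : Fan n d) (uu : Fin n → ((Fin n → ℤ) →ₗ[ℤ] ℤ)) (r : Fin n → S) :
    Set (Poly S d) :=
  gensCone S Δ ∪ gensLin S Δ uu r

/-- the ring `R = S[x₁,…,x_d]/I_S` -/
abbrev RRing (Δ : Fan n d) (uu : Fin n → ((Fin n → ℤ) →ₗ[ℤ] ℤ)) (r : Fin n → S) :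
    Type _ :=
  RingQuot (relOf S (gensI S Δ uu r))

/-- the quotient map `S[x₁,…,x_d] → R` -/
def mkR (Δ : Fan n d) (uu : Fin n → ((Fin n → ℤ) →ₗ[ℤ] ℤ)) (r : Fin n → S) :
    Poly S d →+* RRing S Δ uu r :=
  RingQuot.mkRingHom _

/-- `∏_{j : ⟨u, v j⟩ > 0} (1 - x j) ^ ⟨u, v j⟩` -/
def zPos (Δ : Fan n d) (u : (Fin n → ℤ) →ₗ[ℤ] ℤ) : Poly S d :=
  Finset.univ.noncommProd (fun j => (1 - X S j) ^ (u (Δ.v j)).toNat)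
    (fun j _ k _ _ => commute_one_sub_X_pow S j k _ _)

/-- `∏_{j : ⟨u, v j⟩ < 0} (1 - x j) ^ (-⟨u, v j⟩)` -/
def zNeg (Δ : Fan n d) (u : (Fin n → ℤ) →ₗ[ℤ] ℤ) : Poly S d :=
  Finset.univ.noncommProd (fun j => (1 - X S j) ^ (-(u (Δ.v j))).toNat)
    (fun j _ k _ _ => commute_one_sub_X_pow S j k _ _)

lemma central_commute (ru : Fin n → Sˣ)
    (hcen : ∀ i, (ru i : S) ∈ Subring.center S) (i k : Fin n) :
    Commute (ru i) (ru k) := by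
  show ru i * ru k = ru k * ru i
  exact Units.ext (by simpa using (Subring.mem_center_iff.mp (hcen i) (ru k)).symm)

/-- `r(u) = ∏_i r i ^ a i` for `u = ∑ a i • u i`, the `r i` being invertible. -/
def rOf (ru : Fin n → Sˣ) (hc : ∀ i k, Commute (ru i) (ru k)) (a : Fin n → ℤ) : S :=
  (Finset.univ.noncommProd (fun i => ru i ^ a i)
    (fun i _ k _ _ => (hc i k).zpow_zpow _ _) : Sˣ)

/-- type (ii′) generators : the elements `z(u)` for `u ∈ M` -/
def gensZ (Δ : Fan n d) (uu : Fin n → ((Fin n → ℤ) →ₗ[ℤ] ℤ)) (ru : Fin n → Sˣ)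
    (hc : ∀ i k, Commute (ru i) (ru k)) : Set (Poly S d) :=
  {p | ∃ a : Fin n → ℤ, p = zPos S Δ (∑ i, a i • uu i) -
    Cc S (rOf S ru hc a) * zNeg S Δ (∑ i, a i • uu i)}

/-- the generators of the ideal `𝓘_S` -/
def gensII (Δ : Fan n d) (uu : Fin n → ((Fin n → ℤ) →ₗ[ℤ] ℤ)) (ru : Fin n → Sˣ)
    (hc : ∀ i k, Commute (ru i) (ru k)) : Set (Poly S d) :=
  gensCone S Δ ∪ gensZ S Δ uu ru hc

/-- the ring `ℛ = S[x₁,…,x_d]/𝓘_S` -/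
abbrev RcalRing (Δ : Fan n d) (uu : Fin n → ((Fin n → ℤ) →ₗ[ℤ] ℤ)) (ru : Fin n → Sˣ)
    (hc : ∀ i k, Commute (ru i) (ru k)) : Type _ :=
  RingQuot (relOf S (gensII S Δ uu ru hc))

/-- the quotient map `S[x₁,…,x_d] → ℛ` -/
def mkRcal (Δ : Fan n d) (uu : Fin n → ((Fin n → ℤ) →ₗ[ℤ] ℤ)) (ru : Fin n → Sˣ)
    (hc : ∀ i k, Commute (ru i) (ru k)) : Poly S d →+* RcalRing S Δ uu ru hc :=
  RingQuot.mkRingHom _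

def vr {n d : ℕ} (v : Fin d → Fin n → ℤ) (j : Fin d) : Fin n → ℝ := fun i => (v j i : ℝ)

lemma castBasis {n : ℕ} (b : Module.Basis (Fin n) ℤ (Fin n → ℤ)) :
    ∃ bR : Module.Basis (Fin n) ℝ (Fin n → ℝ), ∀ i k, bR i k = ((b i k : ℤ) : ℝ) := by
  classical
  set e := Pi.basisFun ℤ (Fin n)
  set A := e.toMatrix ⇑b with hA
  haveI : Invertible A := e.invertibleToMatrix b
  set AR := A.map (Int.cast : ℤ → ℝ) with hAR
  haveI : Invertible AR := by
    have : AR = (Int.castRingHom ℝ).mapMatrix A := rfl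
    rw [this]
    exact Invertible.map _ A
  refine ⟨(Pi.basisFun ℝ (Fin n)).map (Matrix.toLinearEquiv' AR ‹_›), ?_⟩
  intro i k
  simp [Matrix.toLinearEquiv', Pi.basisFun_apply, Matrix.mulVec_single, hAR, hA,
    Module.Basis.toMatrix_apply, e]


/-- coordinate data for a cone -/
structure ConeBasis (v : Fin d → Fin n → ℤ) (F : Finset (Fin d)) where
  bR : Module.Basis (Fin n) ℝ (Fin n → ℝ)
  ι : Fin d → Fin n
  inj : Set.InjOn ι ↑F
  eq : ∀ j ∈ F, bR (ι j) = vr v j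

lemma exists_coneBasis {v : Fin d → Fin n → ℤ}
    {F : Finset (Fin d)}
    (h : ∃ (b : Module.Basis (Fin n) ℤ (Fin n → ℤ)) (ι : Fin d → Fin n),
      Set.InjOn ι ↑F ∧ ∀ j ∈ F, b (ι j) = v j) : Nonempty (ConeBasis v F) := by
  obtain ⟨b, ι, hinj, heq⟩ := h
  obtain ⟨bR, hbR⟩ := castBasis b
  refine ⟨⟨bR, ι, hinj, fun j hj => ?_⟩⟩
  funext k
  rw [hbR, heq j hj]
  rfl

lemma card_le_of_coneBasis {v : Fin d → Fin n → ℤ} {F : Finset (Fin d)}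
    (cb : ConeBasis v F) : F.card ≤ n := by
  simpa using Finset.card_le_card_of_injOn cb.ι (fun a _ => Finset.mem_univ _) cb.inj

/-- characterization of membership of subsets' real cones in terms of coordinates -/
lemma mem_realCone_iff {v : Fin d → Fin n → ℤ} {F G : Finset (Fin d)}
    (cb : ConeBasis v F) (hGF : G ⊆ F) (x : Fin n → ℝ) :
    x ∈ realCone v G ↔ (∀ j ∈ G, 0 ≤ cb.bR.repr x (cb.ι j)) ∧
      (∀ i, i ∉ cb.ι '' ↑G → cb.bR.repr x i = 0) := by
  constructor
  · rintro ⟨c, hc0, hcsupp, rfl⟩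
    have hrepr : ∀ i, (cb.bR.repr (∑ j, c j • fun k => ((v j k : ℤ) : ℝ))) i
        = ∑ j ∈ G, c j * (if cb.ι j = i then 1 else 0) := by
      intro i
      rw [map_sum]
      rw [Finsupp.coe_finset_sum, Finset.sum_apply]
      rw [← Finset.sum_subset (Finset.subset_univ G)]
      · apply Finset.sum_congr rfl
        intro j hj
        have : (fun k => ((v j k : ℤ) : ℝ)) = cb.bR (cb.ι j) := (cb.eq j (hGF hj)).symm
        rw [map_smul, this, cb.bR.repr_self]
        simp [Finsupp.single_apply]
      · intro j _ hj
        simp [hcsupp j hj]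
    constructor
    · intro j hj
      rw [hrepr]
      apply Finset.sum_nonneg
      intro l hl
      have := hc0 l
      positivity
    · intro i hi
      rw [hrepr]
      apply Finset.sum_eq_zero
      intro j hj
      have : cb.ι j ≠ i := fun h => hi ⟨j, by simpa using hj, h⟩
      simp [this]
  · rintro ⟨h1, h2⟩
    refine ⟨fun j => if j ∈ G then cb.bR.repr x (cb.ι j) else 0, ?_, ?_, ?_⟩
    · intro j
      dsimp only
      split
      · exact h1 j ‹_›
      · exact le_refl _
    · intro j hj
      simp [hj]
    · have := cb.bR.sum_repr x
      calc x = ∑ i, cb.bR.repr x i • cb.bR i := this.symm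
        _ = ∑ i ∈ Finset.univ.filter (· ∈ cb.ι '' ↑G), cb.bR.repr x i • cb.bR i := by
              rw [Finset.sum_filter_of_ne]
              intro i _ hne
              by_contra hmem
              exact hne (by rw [h2 i (by simpa using hmem)]; exact zero_smul _ _)
        _ = ∑ j ∈ G, cb.bR.repr x (cb.ι j) • cb.bR (cb.ι j) := by
              rw [← Finset.sum_image (f := fun i => cb.bR.repr x i • cb.bR i)
                (g := cb.ι) (fun a ha b hb hab => cb.inj (hGF (by simpa using ha)) (hGF (by simpa using hb)) hab)]
              apply Finset.sum_congr
              · ext i; simp [Finset.mem_image, Set.mem_image]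
              · intros; rfl
        _ = ∑ j, (if j ∈ G then cb.bR.repr x (cb.ι j) else 0) • fun k => ((v j k : ℤ) : ℝ) := by
              rw [← Finset.sum_subset (Finset.subset_univ G)]
              · apply Finset.sum_congr rfl
                intro j hj
                rw [cb.eq j (hGF hj), if_pos hj]
                rfl
              · intro j _ hj
                simp [hj]

lemma realCone_mono {v : Fin d → Fin n → ℤ} {F G : Finset (Fin d)} (h : F ⊆ G) :
    realCone v F ⊆ realCone v G := by
  rintro x ⟨c, h0, hs, rfl⟩
  exact ⟨c, h0, fun j hj => hs j (fun hjF => hj (h hjF)), rfl⟩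

lemma barycenter_mem {v : Fin d → Fin n → ℤ} (G : Finset (Fin d)) :
    (∑ j ∈ G, vr v j) ∈ realCone v G := by
  refine ⟨fun j => if j ∈ G then 1 else 0, ?_, ?_, ?_⟩
  · intro j; dsimp only; split <;> norm_num
  · intro j hj; simp [hj]
  · rw [← Finset.sum_subset (Finset.subset_univ G)]
    · exact Finset.sum_congr rfl (fun j hj => by simp only [hj, if_pos, one_smul]; rfl)
    · intro j _ hj; simp [hj]

lemma repr_baryc {v : Fin d → Fin n → ℤ} {F : Finset (Fin d)} (cb : ConeBasis v F)
    {G : Finset (Fin d)} (hGF : G ⊆ F) :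
    (∀ j ∈ G, cb.bR.repr (∑ l ∈ G, vr v l) (cb.ι j) = 1) ∧
      (∀ i, i ∉ cb.ι '' ↑G → cb.bR.repr (∑ l ∈ G, vr v l) i = 0) := by
  have key : ∀ i, cb.bR.repr (∑ l ∈ G, vr v l) i = ∑ l ∈ G, (if cb.ι l = i then 1 else 0) := by
    intro i
    rw [map_sum, Finsupp.coe_finset_sum, Finset.sum_apply]
    apply Finset.sum_congr rfl
    intro l hl
    rw [← cb.eq l (hGF hl), cb.bR.repr_self]
    simp [Finsupp.single_apply]
  constructor
  · intro j hj
    rw [key]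
    rw [Finset.sum_eq_single_of_mem j hj]
    · simp
    · intro l hl hne
      have : cb.ι l ≠ cb.ι j := fun h => hne (cb.inj (hGF hl) (hGF hj) h)
      simp [this]
  · intro i hi
    rw [key]
    apply Finset.sum_eq_zero
    intro l hl
    have : cb.ι l ≠ i := fun h => hi ⟨l, by simpa using hl, h⟩
    simp [this]

lemma isClosed_realCone {v : Fin d → Fin n → ℤ} {F : Finset (Fin d)} (cb : ConeBasis v F) :
    IsClosed (realCone v F) := by
  have hcont : ∀ i, Continuous fun x : Fin n → ℝ => cb.bR.repr x i := by
    intro i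
    exact LinearMap.continuous_of_finiteDimensional (cb.bR.coord i)
  have : realCone v F = (⋂ j ∈ F, {x : Fin n → ℝ | 0 ≤ cb.bR.repr x (cb.ι j)}) ∩
      (⋂ i ∈ {i : Fin n | i ∉ cb.ι '' ↑F}, {x : Fin n → ℝ | cb.bR.repr x i = 0}) := by
    ext x
    rw [mem_realCone_iff cb (subset_refl F)]
    simp
  rw [this]
  apply IsClosed.inter
  · exact isClosed_biInter fun j _ => isClosed_le continuous_const (hcont _)
  · exact isClosed_biInter fun i _ => isClosed_eq (hcont _) continuous_const


variable {Δ : Fan n d}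

def Fan.coneBasis (Δ : Fan n d) {F : Finset (Fin d)} (hF : Δ.isCone F) : ConeBasis Δ.v F :=
  (exists_coneBasis (Δ.unimodular hF)).some

open Filter Topology in
lemma exists_cone_with_limit (Δ : Fan n d) (xstar w : Fin n → ℝ) :
    ∃ G, Δ.isCone G ∧ xstar ∈ realCone Δ.v G ∧
      ∃ ε : ℝ, 0 < ε ∧ xstar + ε • w ∈ realCone Δ.v G := by
  have h := fun k : ℕ => Δ.complete (xstar + (1 / (k + 1) : ℝ) • w)
  choose f hf1 hf2 using h
  obtain ⟨G, hGfib⟩ := Finite.exists_infinite_fiber f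
  have hfib : (f ⁻¹' {G}).Infinite := Set.infinite_coe_iff.mp hGfib
  obtain ⟨k0, hk0⟩ := hfib.nonempty
  have hk0' : f k0 = G := hk0
  have hGcone : Δ.isCone G := hk0' ▸ hf1 k0
  refine ⟨G, hGcone, ?_, (1 / (k0 + 1) : ℝ), by positivity, hk0' ▸ hf2 k0⟩
  have hclosed : IsClosed (realCone Δ.v G) := isClosed_realCone (Δ.coneBasis hGcone)
  have hfreq : ∃ᶠ k : ℕ in atTop, xstar + (1 / (k + 1) : ℝ) • w ∈ realCone Δ.v G := by
    rw [frequently_atTop]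
    intro a
    obtain ⟨b, hb1, hb2⟩ := hfib.exists_gt a
    exact ⟨b, le_of_lt hb2, (show f b = G from hb1) ▸ hf2 b⟩
  have htend : Tendsto (fun k : ℕ => xstar + (1 / (k + 1) : ℝ) • w) atTop (𝓝 xstar) := by
    have h1 : Tendsto (fun k : ℕ => (1 / (k + 1) : ℝ) • w) atTop (𝓝 ((0 : ℝ) • w)) :=
      tendsto_one_div_add_atTop_nhds_zero_nat.smul_const w
    rw [zero_smul] at h1
    simpa using tendsto_const_nhds.add h1
  exact hclosed.mem_of_frequently_of_tendsto hfreq htend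

/-- if `xstar + ε w` lies in a cone `G` and `xstar` (a barycenter of `G' ⊆ F`) also, then `G' ⊆ G` -/
lemma subset_of_baryc_mem {F G' G : Finset (Fin d)} (hF : Δ.isCone F) (hG : Δ.isCone G)
    (hG'F : G' ⊆ F) (hmem : (∑ l ∈ G', vr Δ.v l) ∈ realCone Δ.v G) : G' ⊆ G := by
  set cb := Δ.coneBasis hF
  have hmemF : (∑ l ∈ G', vr Δ.v l) ∈ realCone Δ.v F :=
    realCone_mono hG'F (barycenter_mem G')
  have hmemI : (∑ l ∈ G', vr Δ.v l) ∈ realCone Δ.v (G ∩ F) := by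
    rw [← Δ.realCone_inter hG hF]; exact ⟨hmem, hmemF⟩
  have hchar := (mem_realCone_iff cb (Finset.inter_subset_right) _).mp hmemI
  intro j0 hj0
  by_contra hj0G
  have h1 : cb.bR.repr (∑ l ∈ G', vr Δ.v l) (cb.ι j0) = 1 :=
    (repr_baryc cb hG'F).1 j0 hj0
  have h0 : cb.bR.repr (∑ l ∈ G', vr Δ.v l) (cb.ι j0) = 0 := by
    apply hchar.2
    rintro ⟨j1, hj1, hj1eq⟩
    have hj1' : j1 ∈ G ∩ F := by simpa using hj1
    have : j1 = j0 := cb.inj (by simp at hj1'; exact Finset.mem_coe.mpr hj1'.2)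
      (hG'F hj0) hj1eq
    exact hj0G (this ▸ (Finset.mem_inter.mp hj1').1)
  rw [h1] at h0
  norm_num at h0

lemma exists_strict_superset {F : Finset (Fin d)} (hF : Δ.isCone F) (hcard : F.card < n) :
    ∃ G, Δ.isCone G ∧ F ⊂ G := by
  set cb := Δ.coneBasis hF with hcb
  have himg : ∃ i0 : Fin n, i0 ∉ F.image cb.ι := by
    by_contra hc
    push_neg at hc
    have : (Finset.univ : Finset (Fin n)) ⊆ F.image cb.ι := fun i _ => hc i
    have h1 : n ≤ (F.image cb.ι).card := by simpa using Finset.card_le_card this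
    have h2 : (F.image cb.ι).card ≤ F.card := Finset.card_image_le
    omega
  obtain ⟨i0, hi0⟩ := himg
  set xstar := ∑ l ∈ F, vr Δ.v l with hxstar
  obtain ⟨G, hGcone, hxG, ε, hε, hxεG⟩ := exists_cone_with_limit Δ xstar (cb.bR i0)
  have hFG : F ⊆ G := subset_of_baryc_mem hF hGcone (subset_refl F) hxG
  refine ⟨G, hGcone, hFG, ?_⟩
  intro hGF
  -- G = F ; derive contradiction from xstar + ε • bR i0 ∈ realCone F
  have hGeq : G = F := Finset.Subset.antisymm hGF hFG
  rw [hGeq] at hxεG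
  have hchar := (mem_realCone_iff cb (subset_refl F) _).mp hxεG
  have hrepr0 : cb.bR.repr (xstar + ε • cb.bR i0) i0 = ε := by
    rw [map_add, map_smul]
    have h1 : cb.bR.repr xstar i0 = 0 := by
      apply (repr_baryc cb (subset_refl F)).2
      rintro ⟨j, hj, hjeq⟩
      exact hi0 (Finset.mem_image.mpr ⟨j, by simpa using hj, hjeq⟩)
    rw [Finsupp.add_apply, h1, cb.bR.repr_self]
    simp [Finsupp.single_apply]
  have : cb.bR.repr (xstar + ε • cb.bR i0) i0 = 0 := by
    apply hchar.2
    rintro ⟨j, hj, hjeq⟩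
    exact hi0 (Finset.mem_image.mpr ⟨j, by simpa using hj, hjeq⟩)
  rw [hrepr0] at this
  exact absurd this (ne_of_gt hε)

lemma card_cone_le {F : Finset (Fin d)} (hF : Δ.isCone F) : F.card ≤ n := card_le_of_coneBasis (Δ.coneBasis hF)

lemma exists_maxcone {F : Finset (Fin d)} (hF : Δ.isCone F) :
    ∃ G, Δ.isCone G ∧ F ⊆ G ∧ G.card = n := by
  obtain h := Nat.le.refl (n := n - F.card)
  generalize hk : n - F.card = k at h
  clear h
  induction k using Nat.strong_induction_on generalizing F with
  | _ k ih =>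
    rcases Nat.lt_or_ge F.card n with hlt | hge
    · obtain ⟨G, hG, hFG⟩ := exists_strict_superset hF hlt
      have hcard : F.card < G.card := Finset.card_lt_card hFG
      have hGn : G.card ≤ n := card_cone_le hG
      exact (ih (n - G.card) (by omega) hG rfl).imp
        (fun H ⟨h1, h2, h3⟩ => ⟨h1, hFG.subset.trans h2, h3⟩)
    · exact ⟨F, hF, subset_refl F, le_antisymm (card_cone_le hF) hge⟩

lemma exists_wall_neighbor {σi : Finset (Fin d)} (hσ : Δ.isCone σi) (hcard : σi.card = n)
    {j : Fin d} (hj : j ∈ σi) :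
    ∃ G, Δ.isCone G ∧ G.card = n ∧ σi.erase j ⊆ G ∧ G ≠ σi := by
  set cb := Δ.coneBasis hσ with hcb
  set W := σi.erase j with hW
  set xstar := ∑ l ∈ W, vr Δ.v l with hxstar
  obtain ⟨H, hHcone, hxH, ε, hε, hxεH⟩ := exists_cone_with_limit Δ xstar (-(vr Δ.v j))
  have hWH : W ⊆ H := subset_of_baryc_mem hσ hHcone (Finset.erase_subset j σi) hxH
  obtain ⟨G, hGcone, hHG, hGn⟩ := exists_maxcone hHcone
  refine ⟨G, hGcone, hGn, hWH.trans hHG, ?_⟩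
  intro hGeq
  have hmem : xstar + ε • (-(vr Δ.v j)) ∈ realCone Δ.v σi := by
    have := realCone_mono (hHG.trans (le_of_eq hGeq)) hxεH
    exact this
  have hchar := (mem_realCone_iff cb (subset_refl σi) _).mp hmem
  have h1 : cb.bR.repr xstar (cb.ι j) = 0 := by
    apply (repr_baryc cb (Finset.erase_subset j σi)).2
    rintro ⟨l, hl, hleq⟩
    have hlW : l ∈ W := by rw [hW]; simpa [Finset.mem_erase, and_comm] using hl
    have : l = j := cb.inj (Finset.mem_coe.mpr (Finset.erase_subset j σi hlW)) hj hleq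
    rw [this] at hlW
    exact absurd hlW (Finset.notMem_erase j σi)
  have h2 : cb.bR.repr (xstar + ε • (-(vr Δ.v j))) (cb.ι j) = -ε := by
    rw [map_add, map_smul, map_neg, Finsupp.add_apply]
    rw [h1, ← cb.eq j hj, cb.bR.repr_self]
    simp [Finsupp.single_apply]
  have h3 := hchar.1 j hj
  rw [h2] at h3
  linarith


variable {m : ℕ}

lemma exists_sigma_superset (o : MaxOrder Δ m) {F : Finset (Fin d)} (hF : Δ.isCone F) :
    ∃ i, F ⊆ o.σ i := by
  obtain ⟨G, hG, hFG, hcard⟩ := exists_maxcone hF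
  obtain ⟨i, hi⟩ := o.σ_surj G hG hcard
  exact ⟨i, hi ▸ hFG⟩

def minIdx (o : MaxOrder Δ m) (F : Finset (Fin d)) (h : ∃ i, F ⊆ o.σ i) : Fin m :=
  (Finset.univ.filter fun i => F ⊆ o.σ i).min' (by
    obtain ⟨i, hi⟩ := h
    exact ⟨i, by simp [hi]⟩)

lemma minIdx_spec (o : MaxOrder Δ m) (F : Finset (Fin d)) (h : ∃ i, F ⊆ o.σ i) :
    F ⊆ o.σ (minIdx o F h) := by
  have := (Finset.univ.filter fun i => F ⊆ o.σ i).min'_mem (by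
    obtain ⟨i, hi⟩ := h; exact ⟨i, by simp [hi]⟩)
  simpa [minIdx] using this

lemma minIdx_min (o : MaxOrder Δ m) (F : Finset (Fin d)) (h : ∃ i, F ⊆ o.σ i)
    (k : Fin m) (hk : F ⊆ o.σ k) : minIdx o F h ≤ k :=
  Finset.min'_le _ _ (by simp [hk])

lemma tau_subset_of_minIdx (hn : 1 ≤ n) (o : MaxOrder Δ m) {F : Finset (Fin d)}
    (hF : Δ.isCone F) (h : ∃ i, F ⊆ o.σ i) :
    o.tau (minIdx o F h) ⊆ F := by
  set i0 := minIdx o F h with hi0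
  intro j hj
  rw [MaxOrder.tau, Finset.mem_filter] at hj
  obtain ⟨hjσ, hjP⟩ := hj
  by_contra hjF
  have hFW : F ⊆ (o.σ i0).erase j :=
    fun x hx => Finset.mem_erase.mpr ⟨fun he => hjF (he ▸ hx), minIdx_spec o F h hx⟩
  obtain ⟨G, hGcone, hGn, hWG, hGne⟩ :=
    exists_wall_neighbor (o.isCone_σ i0) (o.card_σ i0) hjσ
  obtain ⟨k, hk⟩ := o.σ_surj G hGcone hGn
  have hkne : k ≠ i0 := fun he => hGne (hk.symm.trans (congrArg o.σ he))
  have hik : i0 < k := lt_of_le_of_ne (minIdx_min o F h k (hk.symm ▸ hFW.trans hWG)) (Ne.symm hkne)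
  have hjk : j ∉ o.σ k := by
    intro hjk
    have hsub : o.σ i0 ⊆ o.σ k := by
      intro x hx
      rcases eq_or_ne x j with rfl | hxj
      · exact hjk
      · exact hk.symm ▸ hWG (Finset.mem_erase.mpr ⟨hxj, hx⟩)
    have : o.σ i0 = o.σ k :=
      Finset.eq_of_subset_of_card_le hsub (by rw [o.card_σ, o.card_σ])
    exact hkne (o.σ_inj this.symm)
  have hinter : (o.σ i0) ∩ (o.σ k) = (o.σ i0).erase j := by
    apply Finset.Subset.antisymm
    · intro x hx
      rw [Finset.mem_inter] at hx
      exact Finset.mem_erase.mpr ⟨fun he => hjk (he ▸ hx.2), hx.1⟩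
    · intro x hx
      rw [Finset.mem_inter]
      exact ⟨Finset.erase_subset j _ hx, hk.symm ▸ hWG hx⟩
  have hcard : ((o.σ i0) ∩ (o.σ k)).card = n - 1 := by
    rw [hinter, Finset.card_erase_of_mem hjσ, o.card_σ]
  exact hjk (hjP k hik hcard)


-- ====== auxiliary algebra ======

def Xe (e : Fin d →₀ ℕ) : Poly S d := AddMonoidAlgebra.single e 1

lemma Xe_mul (e f : Fin d →₀ ℕ) : Xe S e * Xe S f = Xe S (e + f) := by
  rw [Xe, Xe, Xe, AddMonoidAlgebra.single_mul_single, one_mul]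

lemma X_eq_Xe (j : Fin d) : X S j = Xe S (Finsupp.single j 1) := rfl

def sfF (F : Finset (Fin d)) : Fin d →₀ ℕ := ∑ j ∈ F, Finsupp.single j 1

lemma mon_eq_Xe (F : Finset (Fin d)) : mon S F = Xe S (sfF F) := rfl

lemma sfF_apply (F : Finset (Fin d)) (j : Fin d) : sfF F j = if j ∈ F then 1 else 0 := by
  rw [sfF, Finsupp.finset_sum_apply]
  by_cases hj : j ∈ F
  · rw [Finset.sum_eq_single_of_mem j hj]
    · simp [hj]
    · intro l _ hne
      simp [Finsupp.single_apply, hne]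
  · rw [Finset.sum_eq_zero, if_neg hj]
    intro l hl
    exact Finsupp.single_apply_eq_zero.mpr (fun h => absurd (h ▸ hl) hj)

lemma support_sfF (F : Finset (Fin d)) : (sfF F).support = F := by
  ext j
  rw [Finsupp.mem_support_iff, sfF_apply]
  by_cases hj : j ∈ F <;> simp [hj]

lemma Cc_mul_single (s t : S) (e : Fin d →₀ ℕ) :
    Cc S s * AddMonoidAlgebra.single e t = AddMonoidAlgebra.single e (s * t) := by
  rw [Cc, AddMonoidAlgebra.single_mul_single, zero_add]

lemma X_mul_mon {j : Fin d} {F : Finset (Fin d)} (hj : j ∉ F) :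
    X S j * mon S F = mon S (insert j F) := by
  rw [X_eq_Xe, mon_eq_Xe, mon_eq_Xe, Xe_mul]
  congr 1
  rw [sfF, sfF, Finset.sum_insert hj]

variable {Δ : Fan n d} {uu : Fin n → ((Fin n → ℤ) →ₗ[ℤ] ℤ)} {r : Fin n → S}

lemma mk_gensCone {F : Finset (Fin d)} (h : ¬ Δ.isCone F) :
    mkR S Δ uu r (mon S F) = 0 := by
  have hrel : relOf S (gensI S Δ uu r) (mon S F) 0 := ⟨Or.inl ⟨F, h, rfl⟩, rfl⟩
  have h2 := RingQuot.mkRingHom_rel hrel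
  rw [map_zero] at h2
  exact h2

lemma mk_lin (i : Fin n) :
    mkR S Δ uu r (∑ j, (uu i (Δ.v j)) • X S j) = mkR S Δ uu r (Cc S (r i)) := by
  have hrel : relOf S (gensI S Δ uu r)
      ((∑ j, (uu i (Δ.v j)) • X S j) - Cc S (r i)) 0 := ⟨Or.inr ⟨i, rfl⟩, rfl⟩
  have h2 := RingQuot.mkRingHom_rel hrel
  rw [map_zero, map_sub, sub_eq_zero] at h2
  exact h2

lemma mk_lin_gen {m : ℕ} (hnd : n ≤ d) (hm : 1 ≤ m) (o : MaxOrder Δ m)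
    (hlast : o.σ ⟨m - 1, Nat.sub_lt hm Nat.one_pos⟩ = firstn hnd)
    (huu : ∀ i j : Fin n, uu i (Δ.v (Fin.castLE hnd j)) = if i = j then 1 else 0)
    (u : (Fin n → ℤ) →ₗ[ℤ] ℤ) :
    ∃ s : S, mkR S Δ uu r (∑ j, (u (Δ.v j)) • X S j) = mkR S Δ uu r (Cc S s) := by
  classical
  -- the first `n` edge vectors form a `ℤ`-basis
  have hfcone : Δ.isCone (firstn hnd) := hlast ▸ o.isCone_σ _
  obtain ⟨b, ι, hinj, heq⟩ := Δ.unimodular hfcone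
  have hmem : ∀ k : Fin n, Fin.castLE hnd k ∈ firstn hnd := by
    intro k
    rw [firstn, Finset.mem_map]
    exact ⟨k, Finset.mem_univ k, rfl⟩
  have hginj : Function.Injective (fun k : Fin n => ι (Fin.castLE hnd k)) := by
    intro a b hab
    exact Fin.castLE_injective hnd (hinj (hmem a) (hmem b) hab)
  have hgbij : Function.Bijective (fun k : Fin n => ι (Fin.castLE hnd k)) :=
    (Finite.injective_iff_bijective).mp hginj
  set C : Module.Basis (Fin n) ℤ (Fin n → ℤ) := b.reindex (Equiv.ofBijective _ hgbij).symm with hC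
  have hCk : ∀ k, C k = Δ.v (Fin.castLE hnd k) := by
    intro k
    rw [hC, Module.Basis.reindex_apply, Equiv.symm_symm, Equiv.ofBijective_apply]
    exact heq _ (hmem k)
  set a : Fin n → ℤ := fun i => u (Δ.v (Fin.castLE hnd i)) with ha
  have hu : u = ∑ i, a i • uu i := by
    apply C.ext
    intro k
    rw [hCk, LinearMap.sum_apply]
    rw [Finset.sum_eq_single_of_mem k (Finset.mem_univ k)]
    · rw [LinearMap.smul_apply, huu, if_pos rfl, smul_eq_mul, mul_one]
    · intro i _ hne
      rw [LinearMap.smul_apply, huu, if_neg hne, smul_zero]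
  refine ⟨∑ i, a i • r i, ?_⟩
  have hsum : (∑ j, (u (Δ.v j)) • X S j) = ∑ i, a i • (∑ j, (uu i (Δ.v j)) • X S j) := by
    have h1 : ∀ j : Fin d, u (Δ.v j) • X S j = ∑ i, a i • ((uu i (Δ.v j)) • X S j) := by
      intro j
      rw [hu, LinearMap.sum_apply, Finset.sum_smul]
      apply Finset.sum_congr rfl
      intro i _
      rw [LinearMap.smul_apply, smul_eq_mul, mul_smul]
    rw [Finset.sum_congr rfl (fun j (_ : j ∈ Finset.univ) => h1 j), Finset.sum_comm]
    apply Finset.sum_congr rfl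
    intro i _
    rw [Finset.smul_sum]
  rw [hsum, map_sum]
  have : ∀ i : Fin n, mkR S Δ uu r (a i • (∑ j, (uu i (Δ.v j)) • X S j))
      = mkR S Δ uu r (a i • Cc S (r i)) := by
    intro i
    rw [map_zsmul, map_zsmul, mk_lin]
  rw [Finset.sum_congr rfl (fun i _ => this i), ← map_sum]
  congr 1
  show ∑ x : Fin n, a x • Cc S (r x)
      = AddMonoidAlgebra.single (0 : Fin d →₀ ℕ) (∑ i, a i • r i)
  rw [show AddMonoidAlgebra.single (0 : Fin d →₀ ℕ) (∑ i, a i • r i)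
      = ∑ i, AddMonoidAlgebra.single (0 : Fin d →₀ ℕ) (a i • r i) from
    map_sum (AddMonoidAlgebra.singleAddHom (0 : Fin d →₀ ℕ)) _ _]
  apply Finset.sum_congr rfl
  intro i _
  show a i • (AddMonoidAlgebra.single (0 : Fin d →₀ ℕ) (r i)) = _
  exact AddMonoidAlgebra.smul_single (a i) (0 : Fin d →₀ ℕ) (r i)

lemma exists_subst {m : ℕ} (hnd : n ≤ d) (hm : 1 ≤ m) (o : MaxOrder Δ m)
    (hlast : o.σ ⟨m - 1, Nat.sub_lt hm Nat.one_pos⟩ = firstn hnd)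
    (huu : ∀ i j : Fin n, uu i (Δ.v (Fin.castLE hnd j)) = if i = j then 1 else 0)
    {W : Finset (Fin d)} (hW : Δ.isCone W) {j0 : Fin d} (hj0 : j0 ∈ W) :
    ∃ (s : S) (cf : Fin d → ℤ), ∀ q : Poly S d,
      mkR S Δ uu r (X S j0 * q) = mkR S Δ uu r (Cc S s * q)
        - ∑ k ∈ Finset.univ \ W, cf k • mkR S Δ uu r (X S k * q) := by
  classical
  obtain ⟨b, ι, hinj, heq⟩ := Δ.unimodular hW
  set u := b.coord (ι j0) with hu
  have hcoef : ∀ k ∈ W, u (Δ.v k) = if k = j0 then 1 else 0 := by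
    intro k hk
    rw [hu, Module.Basis.coord_apply, ← heq k hk, b.repr_self, Finsupp.single_apply]
    congr 1
    simp only [eq_iff_iff]
    constructor
    · intro h; exact hinj hk hj0 h
    · intro h; rw [h]
  obtain ⟨s, hs⟩ := mk_lin_gen S hnd hm o hlast huu u
  refine ⟨s, fun k => u (Δ.v k), ?_⟩
  have hsplit : (∑ j, (u (Δ.v j)) • X S j)
      = (∑ k ∈ Finset.univ \ W, (u (Δ.v k)) • X S k) + X S j0 := by
    rw [← Finset.sum_sdiff (Finset.subset_univ W)]
    congr 1
    rw [Finset.sum_eq_single_of_mem j0 hj0]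
    · rw [hcoef j0 hj0, if_pos rfl, one_smul]
    · intro k hk hne
      rw [hcoef k hk, if_neg hne, zero_smul]
  have hkey : mkR S Δ uu r (X S j0) = mkR S Δ uu r (Cc S s)
      - ∑ k ∈ Finset.univ \ W, (u (Δ.v k)) • mkR S Δ uu r (X S k) := by
    rw [eq_sub_iff_add_eq]
    rw [← hs, hsplit, map_add, map_sum]
    rw [add_comm]
    congr 1
    apply Finset.sum_congr rfl
    intro k _
    rw [map_zsmul]
  intro q
  rw [map_mul, hkey, sub_mul, Finset.sum_mul, map_mul]
  congr 1
  apply Finset.sum_congr rfl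
  intro k _
  rw [smul_mul_assoc, map_mul]

variable {m : ℕ}

def PSpan (o : MaxOrder Δ m) (y : RRing S Δ uu r) : Prop :=
  ∃ c : Fin m → S,
    y = ∑ i, mkR S Δ uu r (Cc S (c i)) * mkR S Δ uu r (mon S (o.tau i))

variable {S} {o : MaxOrder Δ m}

lemma PSpan_zero : PSpan S o (0 : RRing S Δ uu r) := by
  refine ⟨0, ?_⟩
  rw [Finset.sum_eq_zero]
  intro i _
  show mkR S Δ uu r (Cc S 0) * _ = 0
  rw [show Cc S (0:S) = 0 from AddMonoidAlgebra.single_zero 0, map_zero, zero_mul]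

lemma PSpan_add {y z : RRing S Δ uu r} (hy : PSpan S o y) (hz : PSpan S o z) :
    PSpan S o (y + z) := by
  obtain ⟨c, rfl⟩ := hy
  obtain ⟨c', rfl⟩ := hz
  refine ⟨c + c', ?_⟩
  rw [← Finset.sum_add_distrib]
  apply Finset.sum_congr rfl
  intro i _
  rw [← add_mul]
  congr 1
  rw [← map_add]
  congr 1
  show Cc S (c i) + Cc S (c' i) = Cc S (c i + c' i)
  exact (AddMonoidAlgebra.single_add _ _ _).symm

lemma PSpan_lmul (s : S) {y : RRing S Δ uu r} (hy : PSpan S o y) :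
    PSpan S o (mkR S Δ uu r (Cc S s) * y) := by
  obtain ⟨c, rfl⟩ := hy
  refine ⟨fun i => s * c i, ?_⟩
  rw [Finset.mul_sum]
  apply Finset.sum_congr rfl
  intro i _
  rw [← mul_assoc, ← map_mul]
  congr 2
  exact Cc_mul_single S s (c i) 0

lemma PSpan_zsmul (a : ℤ) {y : RRing S Δ uu r} (hy : PSpan S o y) :
    PSpan S o (a • y) := by
  obtain ⟨c, rfl⟩ := hy
  refine ⟨fun i => a • c i, ?_⟩
  rw [show (a • ∑ i, mkR S Δ uu r (Cc S (c i)) * mkR S Δ uu r (mon S (o.tau i)))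
      = ∑ i, a • (mkR S Δ uu r (Cc S (c i)) * mkR S Δ uu r (mon S (o.tau i))) from
    Finset.smul_sum]
  apply Finset.sum_congr rfl
  intro i _
  dsimp only
  rw [← smul_mul_assoc, ← map_zsmul]
  congr 2
  show a • Cc S (c i) = Cc S (a • c i)
  exact AddMonoidAlgebra.smul_single _ _ _

lemma PSpan_neg {y : RRing S Δ uu r} (hy : PSpan S o y) : PSpan S o (-y) := by
  have := PSpan_zsmul (-1) hy
  rwa [neg_one_zsmul] at this

lemma PSpan_sub {y z : RRing S Δ uu r} (hy : PSpan S o y) (hz : PSpan S o z) :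
    PSpan S o (y - z) := by
  rw [sub_eq_add_neg]
  exact PSpan_add hy (PSpan_neg hz)

lemma PSpan_sum {ι' : Type*} (t : Finset ι') (g : ι' → RRing S Δ uu r)
    (h : ∀ k ∈ t, PSpan S o (g k)) : PSpan S o (∑ k ∈ t, g k) := by
  classical
  induction t using Finset.induction_on with
  | empty => simpa using PSpan_zero
  | insert _ _ hk ih =>
    rw [Finset.sum_insert hk]
    exact PSpan_add (h _ (Finset.mem_insert_self _ _))
      (ih fun k hkt => h k (Finset.mem_insert_of_mem hkt))

lemma PSpan_tau (i : Fin m) : PSpan S o (mkR S Δ uu r (mon S (o.tau i))) := by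
  classical
  refine ⟨fun i' => if i' = i then 1 else 0, ?_⟩
  rw [Fintype.sum_eq_single i]
  · dsimp only
    rw [if_pos rfl]
    show _ = mkR S Δ uu r (Cc S 1) * _
    rw [show Cc S (1:S) = 1 from rfl, map_one, one_mul]
  · intro i' hne
    dsimp only
    rw [if_neg hne]
    rw [show Cc S (0:S) = 0 from AddMonoidAlgebra.single_zero 0, map_zero, zero_mul]

lemma claim2 (hn : 1 ≤ n) (hnd : n ≤ d) (hm : 1 ≤ m)
    (hlast : o.σ ⟨m - 1, Nat.sub_lt hm Nat.one_pos⟩ = firstn hnd)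
    (huu : ∀ i j : Fin n, uu i (Δ.v (Fin.castLE hnd j)) = if i = j then 1 else 0)
    (hstar : o.Star) :
    ∀ N : ℕ, ∀ F : Finset (Fin d), ∀ hF : Δ.isCone F,
      (m - 1 - (minIdx o F (exists_sigma_superset o hF) : ℕ)) * (d + 1) + F.card ≤ N →
      PSpan S o (mkR S Δ uu r (mon S F)) := by
  intro N
  induction N using Nat.strong_induction_on with
  | _ N ih =>
  intro F hF hμ
  have hex := exists_sigma_superset o hF
  set i0 := minIdx o F hex with hi0
  have htau : o.tau i0 ⊆ F := tau_subset_of_minIdx hn o hF hex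
  by_cases heqtau : F = o.tau i0
  · rw [heqtau]; exact PSpan_tau i0
  · have hssub : o.tau i0 ⊂ F := HasSubset.Subset.ssubset_of_ne htau (Ne.symm heqtau)
    obtain ⟨j0, hj0F, hj0tau⟩ := Finset.exists_of_ssubset hssub
    set F' := F.erase j0 with hF'def
    have hF' : Δ.isCone F' := Δ.isCone_mono hF (Finset.erase_subset _ _)
    have hFσ : F ⊆ o.σ i0 := minIdx_spec o F hex
    have hj0σ : j0 ∈ o.σ i0 := hFσ hj0F
    have htauF' : o.tau i0 ⊆ F' := fun x hx =>
      Finset.mem_erase.mpr ⟨fun he => hj0tau (he ▸ hx), htau hx⟩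
    obtain ⟨s, cf, hsub⟩ := exists_subst S hnd hm o hlast huu (o.isCone_σ i0) hj0σ
    have hXq : X S j0 * mon S F' = mon S F := by
      rw [X_mul_mon S (Finset.notMem_erase j0 F), Finset.insert_erase hj0F]
    have heq1 := hsub (mon S F')
    rw [hXq] at heq1
    rw [heq1]
    -- minIdx of F' equals i0
    have hexF' := exists_sigma_superset o hF'
    have hiF' : minIdx o F' hexF' = i0 := by
      apply le_antisymm
      · exact minIdx_min o F' hexF' i0 ((Finset.erase_subset _ _).trans hFσ)
      · exact hstar i0 _ (htauF'.trans (minIdx_spec o F' hexF'))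
    apply PSpan_sub
    · rw [map_mul]
      apply PSpan_lmul
      apply ih ((m - 1 - (i0 : ℕ)) * (d + 1) + F'.card) _ F' hF' (by rw [hiF'])
      have hcard : F'.card < F.card := Finset.card_lt_card (Finset.erase_ssubset hj0F)
      omega
    · apply PSpan_sum
      intro k hk
      rw [Finset.mem_sdiff] at hk
      have hkσ : k ∉ o.σ i0 := hk.2
      have hkF' : k ∉ F' := fun h => hkσ (hFσ (Finset.erase_subset _ _ h))
      rw [X_mul_mon S hkF']
      set G := insert k F' with hGdef
      by_cases hGcone : Δ.isCone G
      · apply PSpan_zsmul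
        have hexG := exists_sigma_superset o hGcone
        set iG := minIdx o G hexG with hiG
        have hi0iG : (i0 : ℕ) < (iG : ℕ) := by
          have hle : i0 ≤ iG :=
            hstar i0 iG ((htauF'.trans (Finset.subset_insert k F')).trans
              (minIdx_spec o G hexG))
          have hne : i0 ≠ iG := by
            intro he
            exact hkσ (he ▸ minIdx_spec o G hexG (Finset.mem_insert_self k F'))
          exact lt_of_le_of_ne hle (fun h => hne (Fin.val_injective h))
        have hiGm : (iG : ℕ) ≤ m - 1 := by have := iG.isLt; omega
        apply ih ((m - 1 - (iG : ℕ)) * (d + 1) + G.card) _ G hGcone le_rfl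
        have h3 : G.card ≤ d := le_trans (Finset.card_le_univ _) (by simp)
        have h4 : (m - 1 - (iG:ℕ)) + 1 ≤ m - 1 - (i0:ℕ) := by omega
        have h5 : ((m - 1 - (iG:ℕ)) + 1) * (d+1) ≤ (m - 1 - (i0:ℕ)) * (d+1) :=
          Nat.mul_le_mul_right _ h4
        have h6 : (m - 1 - (i0:ℕ)) * (d+1) ≤ N := le_trans (Nat.le_add_right _ _) hμ
        calc (m-1-(iG:ℕ))*(d+1) + G.card ≤ (m-1-(iG:ℕ))*(d+1) + d := by omega
          _ < ((m-1-(iG:ℕ))+1)*(d+1) := by rw [add_mul, one_mul]; omega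
          _ ≤ (m-1-(i0:ℕ))*(d+1) := h5
          _ ≤ N := h6
      · rw [mk_gensCone S hGcone, zsmul_zero]
        exact PSpan_zero

lemma claim1 (hn : 1 ≤ n) (hnd : n ≤ d) (hm : 1 ≤ m)
    (hlast : o.σ ⟨m - 1, Nat.sub_lt hm Nat.one_pos⟩ = firstn hnd)
    (huu : ∀ i j : Fin n, uu i (Δ.v (Fin.castLE hnd j)) = if i = j then 1 else 0)
    (hstar : o.Star) :
    ∀ N : ℕ, ∀ e : Fin d →₀ ℕ, (∑ j ∈ e.support, (e j - 1)) ≤ N →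
      PSpan S o (mkR S Δ uu r (Xe S e)) := by
  intro N
  induction N using Nat.strong_induction_on with
  | _ N ih =>
  intro e hexc
  by_cases hcone : Δ.isCone e.support
  · by_cases hsq : ∃ j0, 2 ≤ e j0
    · obtain ⟨j0, hj0⟩ := hsq
      have hj0supp : j0 ∈ e.support := Finsupp.mem_support_iff.mpr (by omega)
      obtain ⟨s, cf, hsub⟩ := exists_subst S hnd hm o hlast huu hcone hj0supp
      set e' := e - Finsupp.single j0 1 with he'
      have he'app : ∀ j, e' j = e j - (if j0 = j then 1 else 0) := by
        intro j
        rw [he', Finsupp.tsub_apply, Finsupp.single_apply]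
      have hsum : Finsupp.single j0 1 + e' = e := by
        ext j
        rw [Finsupp.add_apply, he'app, Finsupp.single_apply]
        by_cases h : j0 = j
        · subst h; rw [if_pos rfl]; omega
        · simp [h]
      have hXe : X S j0 * Xe S e' = Xe S e := by rw [X_eq_Xe, Xe_mul, hsum]
      have heq1 := hsub (Xe S e')
      rw [hXe] at heq1
      rw [heq1]
      have hsupp' : e'.support = e.support := by
        ext j
        rw [Finsupp.mem_support_iff, Finsupp.mem_support_iff, he'app]
        by_cases h : j0 = j
        · subst h; rw [if_pos rfl]; omega
        · simp [h]
      have hexcval : (∑ j ∈ e'.support, (e' j - 1)) + 1 = ∑ j ∈ e.support, (e j - 1) := by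
        rw [hsupp']
        rw [← Finset.add_sum_erase _ _ hj0supp, ← Finset.add_sum_erase _ (fun j => e j - 1) hj0supp]
        have h2 : ∀ j ∈ e.support.erase j0, e' j - 1 = e j - 1 := by
          intro j hj
          rw [he'app, if_neg (fun h => (Finset.mem_erase.mp hj).1 h.symm)]
          omega
        rw [Finset.sum_congr rfl h2]
        have h1 : e' j0 = e j0 - 1 := by rw [he'app, if_pos rfl]
        omega
      apply PSpan_sub
      · rw [map_mul]
        apply PSpan_lmul
        exact ih (∑ j ∈ e'.support, (e' j - 1)) (by omega) e' le_rfl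
      · apply PSpan_sum
        intro k hk
        rw [Finset.mem_sdiff] at hk
        have hksupp : k ∉ e.support := hk.2
        have hke' : k ∉ e'.support := hsupp' ▸ hksupp
        apply PSpan_zsmul
        rw [X_eq_Xe, Xe_mul]
        set ek : Fin d →₀ ℕ := Finsupp.single k 1 + e' with hek
        have hsuppk : ek.support = insert k e'.support := by
          rw [hek, Finsupp.support_add_eq, Finsupp.support_single_ne_zero k one_ne_zero,
            ← Finset.insert_eq]
          rw [Finsupp.support_single_ne_zero k one_ne_zero]
          simp [Finset.disjoint_singleton_left, hke']
        have hexck : ∑ j ∈ ek.support, (ek j - 1) = ∑ j ∈ e'.support, (e' j - 1) := by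
          rw [hsuppk, Finset.sum_insert hke']
          have hk0 : ek k - 1 = 0 := by
            rw [hek, Finsupp.add_apply, Finsupp.single_apply, if_pos rfl]
            have h9 : e' k = 0 := Finsupp.notMem_support_iff.mp hke'
            omega
          rw [hk0, zero_add]
          apply Finset.sum_congr rfl
          intro j hj
          rw [hek, Finsupp.add_apply, Finsupp.single_apply,
            if_neg (fun h : k = j => hke' (h ▸ hj)), zero_add]
        exact ih (∑ j ∈ e'.support, (e' j - 1)) (by omega) _ (le_of_eq hexck)
    · push_neg at hsq
      have hesq : e = sfF e.support := by
        ext j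
        rw [sfF_apply]
        by_cases h : j ∈ e.support
        · rw [if_pos h]
          have h1 : e j ≠ 0 := Finsupp.mem_support_iff.mp h
          have h2 := hsq j
          omega
        · rw [if_neg h]
          exact Finsupp.notMem_support_iff.mp h
      rw [show Xe S e = mon S e.support by rw [mon_eq_Xe, ← hesq]]
      exact claim2 hn hnd hm hlast huu hstar _ e.support hcone le_rfl
  · have hle : ∀ j, sfF e.support j ≤ e j := by
      intro j
      rw [sfF_apply]
      by_cases h : j ∈ e.support
      · rw [if_pos h]
        have := Finsupp.mem_support_iff.mp h
        omega
      · rw [if_neg h]; omega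
    set e'' := e - sfF e.support with he''
    have hsum : sfF e.support + e'' = e := by
      ext j
      rw [Finsupp.add_apply, he'', Finsupp.tsub_apply]
      have := hle j
      omega
    have : Xe S e = mon S e.support * Xe S e'' := by
      rw [mon_eq_Xe, Xe_mul, hsum]
    rw [this, map_mul, mk_gensCone S hcone, zero_mul]
    exact PSpan_zero

lemma PSpan_all (hn : 1 ≤ n) (hnd : n ≤ d) (hm : 1 ≤ m)
    (hlast : o.σ ⟨m - 1, Nat.sub_lt hm Nat.one_pos⟩ = firstn hnd)
    (huu : ∀ i j : Fin n, uu i (Δ.v (Fin.castLE hnd j)) = if i = j then 1 else 0)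
    (hstar : o.Star) (p : Poly S d) : PSpan S o (mkR S Δ uu r p) := by
  induction p using AddMonoidAlgebra.induction with
  | zero => rw [map_zero]; exact PSpan_zero
  | single_add a b f haf hb ih =>
    rw [map_add]
    refine PSpan_add ?_ ih
    have : AddMonoidAlgebra.single a b = Cc S b * Xe S a := by
      rw [Xe, Cc_mul_single, mul_one]
    rw [show (AddMonoidAlgebra.single a b : Poly S d) = Cc S b * Xe S a from this, map_mul]
    exact PSpan_lmul b (claim1 hn hnd hm hlast huu hstar _ a le_rfl)


theorem statement3 {n d m : ℕ} (hn : 1 ≤ n) (hnd : n ≤ d) (hm : 1 ≤ m)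
    (Δ : Fan n d) (o : MaxOrder Δ m) (hstar : o.Star)
    (hlast : o.σ ⟨m - 1, by omega⟩ = firstn hnd)
    (S : Type*) [Ring S] (r : Fin n → S) (hr : ∀ i, r i ∈ Subring.center S)
    (uu : Fin n → ((Fin n → ℤ) →ₗ[ℤ] ℤ))
    (huu : ∀ i j : Fin n, uu i (Δ.v (Fin.castLE hnd j)) = if i = j then 1 else 0) :
    ∀ y : RRing S Δ uu r, ∃ c : Fin m → S,
      y = ∑ i, mkR S Δ uu r (Cc S (c i)) * mkR S Δ uu r (mon S (o.tau i)) := by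
  intro y
  obtain ⟨p, hp⟩ := RingQuot.mkRingHom_surjective _ y
  obtain ⟨c, hc⟩ := PSpan_all (o := o) hn hnd hm hlast huu hstar p
  exact ⟨c, by rw [← hp]; exact hc⟩

end SU
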